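/- arXiv:1911.05822 — 2 statements merged into one kernel-verified Lean document; each statement's English description precedes it below -/
import Mathlib

section
/- Let r > 0, s ∈ (0, r], κ > 0, and let H, G, Z be i.i.d. standard Gaussian random variables with Y = Rad(f(sG + √(r² − s²) Z)). Define L̄(α, μ) = √(E[(αH + μGY − 1)_−²]) − α√κ for α ≥ 0, μ ∈ ℝ, and η(q, ρ) = E[(ρGY + H√(1 − ρ²) − 1/q)_−²] − (1 − ρ²)κ. Assume the separability condition κ > min_{t∈ℝ} E[(H + tGY)_−²], let q⋆ be the unique solution of min_{−1 ≤ ρ ≤ 1} η(q, ρ) = 0, and set k₀ = √(⌈(q⋆)²⌉ + 1). Then for every k ≥ k₀, the minimum of α² + μ² over the set {(α, μ) : α ≥ 0, α² + μ² ≤ k², L̄(α, μ) ≤ 0} equals (q⋆)². -/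
open MeasureTheory ProbabilityTheory Filter Set

/-- The sigmoid function `f(t) = (1 + e^{−t})⁻¹`. -/
noncomputable def sigmoid (t : ℝ) : ℝ := (1 + Real.exp (-t))⁻¹

/-- The negative part `(x)₋ = min x 0`. -/
noncomputable def negp (x : ℝ) : ℝ := min x 0

/-- The standard Gaussian measure on `ℝ`. -/
noncomputable def stdGaussian : Measure ℝ := gaussianReal 0 1

/-- `E[φ(H, GY)]` where `H, G, Z` are i.i.d. standard Gaussian and, conditionally on `(G,Z)`,
`Y = Rad(f(sG + √(r²−s²)Z))`: the expectation is computed by conditioning on `Y = ±1`. -/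
noncomputable def Elog (r s : ℝ) (φ : ℝ → ℝ → ℝ) : ℝ :=
  ∫ h, (∫ g, (∫ z,
      (sigmoid (s * g + Real.sqrt (r ^ 2 - s ^ 2) * z) * φ h g
        + (1 - sigmoid (s * g + Real.sqrt (r ^ 2 - s ^ 2) * z)) * φ h (-g))
    ∂stdGaussian) ∂stdGaussian) ∂stdGaussian

/-- `L̄(α, μ) = √(E[(αH + μGY − 1)₋²]) − α√κ`. -/
noncomputable def Lbar (r s κ α μ : ℝ) : ℝ :=
  Real.sqrt (Elog r s fun h v => (negp (α * h + μ * v - 1)) ^ 2) - α * Real.sqrt κ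

/-- `η(q, ρ) = E[(ρGY + H√(1−ρ²) − 1/q)₋²] − (1−ρ²)κ`. -/
noncomputable def etaLog (r s κ q ρ : ℝ) : ℝ :=
  (Elog r s fun h v => (negp (ρ * v + Real.sqrt (1 - ρ ^ 2) * h - 1 / q)) ^ 2)
    - (1 - ρ ^ 2) * κ

/-! Writing a nonzero `(α, μ)` with `α ≥ 0` in polar form `q • (√(1 - ρ²), ρ)`, the
2-homogeneity of `x ↦ (x)₋²` turns `L̄(α, μ) ≤ 0` into `η(q, ρ) ≤ 0`. So the feasible norms are
the `q > 0` with `min_ρ η(q, ρ) ≤ 0`. This minimum is antitone in `q` (the loss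
`(x - 1/q)₋²` decreases as `q` grows), so uniqueness of its zero forces every feasible `q` to be at
least `q⋆`; conversely a minimiser `ρ₀` of the continuous function `η(q⋆, ·)` on `[-1, 1]` gives a
feasible point of norm `q⋆`. -/

instance : IsProbabilityMeasure _root_.stdGaussian := by
  unfold _root_.stdGaussian; infer_instance

lemma integrable_sq_stdGaussian : Integrable (fun x : ℝ => x ^ 2) stdGaussian := by
  simpa [_root_.stdGaussian] using (memLp_id_gaussianReal (μ := 0) (v := 1) 2).integrable_sq

lemma integrable_quadratic_stdGaussian_prod (C : ℝ) :
    Integrable (fun p : ℝ × ℝ => C * (1 + p.1 ^ 2 + p.2 ^ 2)) (stdGaussian.prod stdGaussian) :=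
  (((integrable_const 1).add (integrable_sq_stdGaussian.comp_fst _)).add
    (integrable_sq_stdGaussian.comp_snd _)).const_mul C

lemma sigmoid_mem_Icc (t : ℝ) : sigmoid t ∈ Icc 0 1 :=
  ⟨Real.sigmoid_nonneg t, Real.sigmoid_le_one t⟩

@[fun_prop]
lemma continuous_sigmoid' : Continuous sigmoid := continuous_sigmoid

@[fun_prop]
lemma continuous_negp : Continuous negp := continuous_id.min continuous_const

lemma negp_mul {q : ℝ} (hq : 0 ≤ q) (x : ℝ) : negp (q * x) = q * negp x := by
  simp only [negp, mul_min_of_nonneg _ _ hq, mul_zero]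

lemma negp_sq_antitone : Antitone fun x => negp x ^ 2 := by
  intro x y hxy
  have hmono : negp x ≤ negp y := min_le_min hxy le_rfl
  have hy : negp y ≤ 0 := min_le_right _ _
  dsimp only
  nlinarith

lemma negp_sq_le_sq (x : ℝ) : negp x ^ 2 ≤ x ^ 2 := by
  rcases le_total x 0 with hx | hx
  · rw [negp, min_eq_left hx]
  · simpa [negp, min_eq_right hx] using sq_nonneg x

lemma negp_affine_sq_le (a b c h v : ℝ) :
    negp (b * v + a * h - c) ^ 2 ≤ 3 * (a ^ 2 + b ^ 2 + c ^ 2) * (1 + h ^ 2 + v ^ 2) := by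
  refine (negp_sq_le_sq _).trans ?_
  nlinarith [sq_nonneg (b * v - a * h), sq_nonneg (b * v + c), sq_nonneg (a * h + c),
    mul_nonneg (sq_nonneg a) (sq_nonneg v), mul_nonneg (sq_nonneg b) (sq_nonneg h),
    mul_nonneg (sq_nonneg c) (sq_nonneg h), mul_nonneg (sq_nonneg c) (sq_nonneg v),
    sq_nonneg a, sq_nonneg b]

lemma integrable_sigmoid_affine (a b : ℝ) :
    Integrable (fun z => sigmoid (a + b * z)) stdGaussian :=
  Integrable.of_bound (by fun_prop) 1 <| ae_of_all _ fun z => by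
    rw [Real.norm_eq_abs, abs_le]
    exact ⟨by linarith [(sigmoid_mem_Icc (a + b * z)).1], (sigmoid_mem_Icc _).2⟩

/-- `P(Y = +1 | G = g)`. -/
noncomputable def probPlus (r s g : ℝ) : ℝ :=
  ∫ z, sigmoid (s * g + Real.sqrt (r ^ 2 - s ^ 2) * z) ∂stdGaussian

lemma probPlus_mem_Icc (r s g : ℝ) : probPlus r s g ∈ Icc 0 1 := by
  refine ⟨integral_nonneg fun z => (sigmoid_mem_Icc _).1, ?_⟩
  calc probPlus r s g ≤ ∫ _, (1 : ℝ) ∂stdGaussian :=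
        integral_mono (integrable_sigmoid_affine _ _) (integrable_const 1)
          fun z => (sigmoid_mem_Icc _).2
    _ = 1 := by simp

@[fun_prop]
lemma continuous_probPlus (r s : ℝ) : Continuous (probPlus r s) :=
  continuous_of_dominated (fun _ => by fun_prop)
    (fun g => ae_of_all _ fun z => by
      rw [Real.norm_eq_abs, abs_of_nonneg (sigmoid_mem_Icc _).1]
      exact (sigmoid_mem_Icc _).2)
    (integrable_const 1) (ae_of_all _ fun z => by fun_prop)

/-- `E[φ(H, GY) | H = p.1, G = p.2]`. -/
noncomputable def condExpY (r s : ℝ) (φ : ℝ → ℝ → ℝ) (p : ℝ × ℝ) : ℝ :=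
  probPlus r s p.2 * φ p.1 p.2 + (1 - probPlus r s p.2) * φ p.1 (-p.2)

section Elog

variable {r s : ℝ}

lemma Elog_eq_integral_integral_condExpY (φ : ℝ → ℝ → ℝ) :
    Elog r s φ = ∫ h, ∫ g, condExpY r s φ (h, g) ∂stdGaussian ∂stdGaussian := by
  unfold Elog
  congr 1; funext h; congr 1; funext g
  have hlin : ∀ σ : ℝ, σ * φ h g + (1 - σ) * φ h (-g) = (φ h g - φ h (-g)) * σ + φ h (-g) :=
    fun σ => by ring
  simp only [hlin]
  rw [integral_add ((integrable_sigmoid_affine _ _).const_mul _) (integrable_const _),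
    integral_const_mul, integral_const, probReal_univ, one_smul, condExpY, probPlus]
  ring

lemma Elog_eq_integral_condExpY {φ : ℝ → ℝ → ℝ}
    (hφ : Integrable (condExpY r s φ) (stdGaussian.prod stdGaussian)) :
    Elog r s φ = ∫ p, condExpY r s φ p ∂(stdGaussian.prod stdGaussian) := by
  rw [integral_prod _ hφ, Elog_eq_integral_integral_condExpY]

lemma Elog_const_mul (c : ℝ) (φ : ℝ → ℝ → ℝ) :
    Elog r s (fun h v => c * φ h v) = c * Elog r s φ := by
  simp only [Elog_eq_integral_integral_condExpY, ← integral_const_mul]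
  congr 1; funext h; congr 1; funext g
  simp only [condExpY]
  ring

lemma Elog_const (c : ℝ) : Elog r s (fun _ _ => c) = c := by
  simp [Elog_eq_integral_integral_condExpY, condExpY, ← add_mul]

lemma abs_condExpY_le {φ : ℝ → ℝ → ℝ} {C : ℝ}
    (hC : ∀ h v, |φ h v| ≤ C * (1 + h ^ 2 + v ^ 2)) (p : ℝ × ℝ) :
    |condExpY r s φ p| ≤ C * (1 + p.1 ^ 2 + p.2 ^ 2) := by
  obtain ⟨hP0, hP1⟩ := probPlus_mem_Icc r s p.2
  have hplus := abs_le.1 (hC p.1 p.2)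
  have hminus := abs_le.1 (hC p.1 (-p.2))
  rw [neg_sq] at hminus
  rw [condExpY, abs_le]
  constructor <;> nlinarith

lemma integrable_condExpY {φ : ℝ → ℝ → ℝ} (hφ : Measurable (Function.uncurry φ)) {C : ℝ}
    (hC : ∀ h v, |φ h v| ≤ C * (1 + h ^ 2 + v ^ 2)) :
    Integrable (condExpY r s φ) (stdGaussian.prod stdGaussian) := by
  refine (integrable_quadratic_stdGaussian_prod C).mono' ?_
    (ae_of_all _ fun p => (abs_condExpY_le hC p))
  have hP : Measurable fun p : ℝ × ℝ => probPlus r s p.2 :=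
    (continuous_probPlus r s).measurable.comp measurable_snd
  exact (((hP.mul hφ).add ((measurable_const.sub hP).mul
    (hφ.comp (measurable_fst.prodMk measurable_snd.neg))))).aestronglyMeasurable

lemma Elog_mono {φ ψ : ℝ → ℝ → ℝ}
    (hφ : Integrable (condExpY r s φ) (stdGaussian.prod stdGaussian))
    (hψ : Integrable (condExpY r s ψ) (stdGaussian.prod stdGaussian))
    (hle : ∀ h v, φ h v ≤ ψ h v) : Elog r s φ ≤ Elog r s ψ := by
  rw [Elog_eq_integral_condExpY hφ, Elog_eq_integral_condExpY hψ]
  refine integral_mono hφ hψ fun p => ?_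
  obtain ⟨hP0, hP1⟩ := probPlus_mem_Icc r s p.2
  exact add_le_add (mul_le_mul_of_nonneg_left (hle _ _) hP0)
    (mul_le_mul_of_nonneg_left (hle _ _) (sub_nonneg.2 hP1))

theorem continuous_Elog {X : Type*} [TopologicalSpace X] [FirstCountableTopology X]
    {φ : X → ℝ → ℝ → ℝ} (hφ : Continuous fun x : X × ℝ × ℝ => φ x.1 x.2.1 x.2.2) {C : ℝ}
    (hC : ∀ x h v, |φ x h v| ≤ C * (1 + h ^ 2 + v ^ 2)) :
    Continuous fun x => Elog r s (φ x) := by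
  have hjoint : Continuous fun x : X × ℝ × ℝ => condExpY r s (φ x.1) x.2 := by
    have hneg : Continuous fun x : X × ℝ × ℝ => φ x.1 x.2.1 (-x.2.2) :=
      hφ.comp (by fun_prop : Continuous fun x : X × ℝ × ℝ => (x.1, x.2.1, -x.2.2))
    unfold condExpY
    fun_prop
  have hint : ∀ x, Integrable (condExpY r s (φ x)) (stdGaussian.prod stdGaussian) := fun x =>
    integrable_condExpY (hφ.comp (Continuous.prodMk_right x)).measurable (hC x)
  simp only [Elog_eq_integral_condExpY (hint _)]
  exact continuous_of_dominated (fun x => (hint x).aestronglyMeasurable)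
    (fun x => ae_of_all _ (abs_condExpY_le (hC x))) (integrable_quadratic_stdGaussian_prod C)
    (ae_of_all _ fun p => hjoint.comp (Continuous.prodMk_left p))

end Elog

lemma one_sub_sq_nonneg_of_mem_Icc {ρ : ℝ} (hρ : ρ ∈ Icc (-1 : ℝ) 1) : 0 ≤ 1 - ρ ^ 2 :=
  sub_nonneg.2 ((sq_le_one_iff_abs_le_one ρ).2 (abs_le.2 hρ))

lemma polar_sq_add_sq (q : ℝ) {ρ : ℝ} (hρ : ρ ∈ Icc (-1 : ℝ) 1) :
    (q * Real.sqrt (1 - ρ ^ 2)) ^ 2 + (q * ρ) ^ 2 = q ^ 2 := by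
  rw [mul_pow, Real.sq_sqrt (one_sub_sq_nonneg_of_mem_Icc hρ)]
  ring

lemma exists_polar {α μ : ℝ} (hα : 0 ≤ α) (h0 : α ≠ 0 ∨ μ ≠ 0) :
    ∃ q > 0, ∃ ρ ∈ Icc (-1 : ℝ) 1, α = q * Real.sqrt (1 - ρ ^ 2) ∧ μ = q * ρ := by
  have hpos : 0 < α ^ 2 + μ ^ 2 := by
    rcases h0 with h | h <;> positivity
  set q := Real.sqrt (α ^ 2 + μ ^ 2)
  have hq : 0 < q := Real.sqrt_pos.2 hpos
  have hq2 : q ^ 2 = α ^ 2 + μ ^ 2 := Real.sq_sqrt hpos.le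
  have hρ : μ / q ∈ Icc (-1 : ℝ) 1 := by
    rw [mem_Icc, ← abs_le, abs_div, abs_of_pos hq, div_le_one hq]
    exact Real.abs_le_sqrt (by nlinarith)
  refine ⟨q, hq, μ / q, hρ, ?_, by field_simp⟩
  have hsq : 1 - (μ / q) ^ 2 = (α / q) ^ 2 := by
    field_simp
    linarith
  rw [hsq, Real.sqrt_sq (div_nonneg hα hq.le)]
  field_simp

lemma Lbar_zero_zero (r s κ : ℝ) : Lbar r s κ 0 0 = 1 := by
  simp [Lbar, negp, Elog_const]

lemma Lbar_polar_nonpos_iff {r s κ q ρ : ℝ} (hκ : 0 ≤ κ) (hq : 0 < q)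
    (hρ : ρ ∈ Icc (-1 : ℝ) 1) :
    Lbar r s κ (q * Real.sqrt (1 - ρ ^ 2)) (q * ρ) ≤ 0 ↔ etaLog r s κ q ρ ≤ 0 := by
  have hscale : ∀ h v, negp (q * Real.sqrt (1 - ρ ^ 2) * h + q * ρ * v - 1) ^ 2
      = q ^ 2 * negp (ρ * v + Real.sqrt (1 - ρ ^ 2) * h - 1 / q) ^ 2 := by
    intro h v
    rw [show q * Real.sqrt (1 - ρ ^ 2) * h + q * ρ * v - 1
        = q * (ρ * v + Real.sqrt (1 - ρ ^ 2) * h - 1 / q) by field_simp; ring,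
      negp_mul hq.le]
    ring
  have hrhs : q * Real.sqrt (1 - ρ ^ 2) * Real.sqrt κ
      = Real.sqrt (q ^ 2 * ((1 - ρ ^ 2) * κ)) := by
    rw [Real.sqrt_mul (sq_nonneg q), Real.sqrt_sq hq.le,
      Real.sqrt_mul (one_sub_sq_nonneg_of_mem_Icc hρ), mul_assoc]
  have hq2 : 0 < q ^ 2 := by positivity
  rw [Lbar, etaLog, sub_nonpos, sub_nonpos, hrhs]
  simp only [hscale, Elog_const_mul]
  rw [Real.sqrt_le_sqrt_iff (by positivity [one_sub_sq_nonneg_of_mem_Icc hρ]),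
    mul_le_mul_iff_right₀ hq2]

section eta

variable {r s κ : ℝ}

lemma integrable_condExpY_negp_sq (a b c : ℝ) :
    Integrable (condExpY r s fun h v => negp (b * v + a * h - c) ^ 2)
      (stdGaussian.prod stdGaussian) :=
  integrable_condExpY (by fun_prop) fun h v => by
    rw [abs_of_nonneg (sq_nonneg _)]
    exact negp_affine_sq_le a b c h v

lemma etaLog_le_of_le {q₁ q₂ : ℝ} (hq₁ : 0 < q₁) (hle : q₁ ≤ q₂) (ρ : ℝ) :
    etaLog r s κ q₂ ρ ≤ etaLog r s κ q₁ ρ := by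
  have hinv : 1 / q₂ ≤ 1 / q₁ := one_div_le_one_div_of_le hq₁ hle
  unfold etaLog
  gcongr 1
  exact Elog_mono (integrable_condExpY_negp_sq _ _ _) (integrable_condExpY_negp_sq _ _ _)
    fun h v => negp_sq_antitone (by linarith)

lemma continuousOn_etaLog (q : ℝ) : ContinuousOn (etaLog r s κ q) (Icc (-1) 1) := by
  rw [continuousOn_iff_continuous_domRestrict]
  have hbound : ∀ (ρ : Icc (-1 : ℝ) 1) h v,
      |negp (ρ * v + Real.sqrt (1 - (ρ : ℝ) ^ 2) * h - 1 / q) ^ 2|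
        ≤ 3 * (2 + (1 / q) ^ 2) * (1 + h ^ 2 + v ^ 2) := by
    intro ρ h v
    rw [abs_of_nonneg (sq_nonneg _)]
    refine (negp_affine_sq_le _ _ _ h v).trans ?_
    have hρ2 : (ρ : ℝ) ^ 2 ≤ 1 := (sq_le_one_iff_abs_le_one _).2 (abs_le.2 ρ.2)
    rw [Real.sq_sqrt (one_sub_sq_nonneg_of_mem_Icc ρ.2)]
    gcongr
    linarith [sq_nonneg (ρ : ℝ)]
  exact (continuous_Elog (by fun_prop) hbound).sub (by fun_prop)

lemma exists_isMinOn_etaLog (r s κ q : ℝ) :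
    ∃ ρ₀ ∈ Icc (-1 : ℝ) 1, IsMinOn (etaLog r s κ q) (Icc (-1) 1) ρ₀ :=
  isCompact_Icc.exists_isMinOn ⟨0, by norm_num⟩ (continuousOn_etaLog q)

noncomputable def etaMin (r s κ q : ℝ) : ℝ := ⨅ ρ : Icc (-1 : ℝ) 1, etaLog r s κ q ρ

lemma etaMin_le {q ρ : ℝ} (hρ : ρ ∈ Icc (-1 : ℝ) 1) : etaMin r s κ q ≤ etaLog r s κ q ρ := by
  obtain ⟨ρ₀, hρ₀, hmin⟩ := exists_isMinOn_etaLog r s κ q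
  rw [etaMin, hmin.iInf_eq hρ₀]
  exact hmin hρ

lemma antitoneOn_etaMin : AntitoneOn (etaMin r s κ) (Ioi 0) := by
  intro q₁ hq₁ q₂ _ hle
  obtain ⟨ρ₁, hρ₁, hmin⟩ := exists_isMinOn_etaLog r s κ q₁
  calc etaMin r s κ q₂ ≤ etaLog r s κ q₂ ρ₁ := etaMin_le hρ₁
    _ ≤ etaLog r s κ q₁ ρ₁ := etaLog_le_of_le hq₁ hle ρ₁
    _ = etaMin r s κ q₁ := (hmin.iInf_eq hρ₁).symm

end eta

lemma AntitoneOn.le_of_apply_le_of_unique {α β : Type*} [LinearOrder α] [PartialOrder β]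
    {f : α → β} {S : Set α} (hf : AntitoneOn f S) {a x : α} (ha : a ∈ S) (hx : x ∈ S)
    (huniq : ∀ y ∈ S, f y = f a → y = a) (hfx : f x ≤ f a) : a ≤ x := by
  by_contra! hlt
  have hfa : f a ≤ f x := hf hx ha hlt.le
  exact hlt.ne (huniq x hx (le_antisymm hfx hfa))

theorem min_norm_sq_eq_qstar_sq_general (r s κ : ℝ) (hκ : 0 < κ)
    (qstar : ℝ) (hq0 : 0 < qstar)
    (hqzero : (⨅ ρ : Set.Icc (-1 : ℝ) 1, etaLog r s κ qstar ρ) = 0)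
    (hquniq : ∀ q : ℝ, 0 < q →
      (⨅ ρ : Set.Icc (-1 : ℝ) 1, etaLog r s κ q ρ) = 0 → q = qstar) :
    ∀ k : ℝ, Real.sqrt ((⌈qstar ^ 2⌉₊ : ℝ) + 1) ≤ k →
      IsLeast {v : ℝ | ∃ α μ : ℝ, 0 ≤ α ∧ α ^ 2 + μ ^ 2 ≤ k ^ 2 ∧
        Lbar r s κ α μ ≤ 0 ∧ v = α ^ 2 + μ ^ 2} (qstar ^ 2) := by
  change etaMin r s κ qstar = 0 at hqzero
  change ∀ q : ℝ, 0 < q → etaMin r s κ q = 0 → q = qstar at hquniq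
  intro k hk
  have hqk : qstar ^ 2 ≤ k ^ 2 :=
    calc qstar ^ 2 ≤ (⌈qstar ^ 2⌉₊ : ℝ) + 1 := by linarith [Nat.le_ceil (qstar ^ 2)]
      _ = Real.sqrt ((⌈qstar ^ 2⌉₊ : ℝ) + 1) ^ 2 := (Real.sq_sqrt (by positivity)).symm
      _ ≤ k ^ 2 := pow_le_pow_left₀ (Real.sqrt_nonneg _) hk 2
  constructor
  · obtain ⟨ρ₀, hρ₀, hmin⟩ := exists_isMinOn_etaLog r s κ qstar
    have hη : etaLog r s κ qstar ρ₀ ≤ 0 := ((hmin.iInf_eq hρ₀).symm.trans hqzero).le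
    refine ⟨qstar * Real.sqrt (1 - ρ₀ ^ 2), qstar * ρ₀, by positivity, ?_,
      (Lbar_polar_nonpos_iff hκ.le hq0 hρ₀).2 hη, (polar_sq_add_sq qstar hρ₀).symm⟩
    rwa [polar_sq_add_sq qstar hρ₀]
  · rintro _ ⟨α, μ, hα, -, hL, rfl⟩
    have h0 : α ≠ 0 ∨ μ ≠ 0 := by
      by_contra! h
      rw [h.1, h.2, Lbar_zero_zero] at hL
      norm_num at hL
    obtain ⟨q, hq, ρ, hρ, rfl, rfl⟩ := exists_polar hα h0
    have hηq : etaMin r s κ q ≤ etaMin r s κ qstar := by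
      rw [hqzero]
      exact (etaMin_le hρ).trans ((Lbar_polar_nonpos_iff hκ.le hq hρ).1 hL)
    have hle : qstar ≤ q := antitoneOn_etaMin.le_of_apply_le_of_unique hq0 hq
      (fun y hy hy0 => hquniq y hy (hy0.trans hqzero)) hηq
    rw [polar_sq_add_sq q hρ]
    exact pow_le_pow_left₀ hq0.le hle 2

/-- under the separability condition `κ > min_t E[(H + tGY)₋²]`, with `q⋆` the
unique positive solution of `min_{ρ∈[−1,1]} η(q, ρ) = 0` and `k₀ = √(⌈(q⋆)²⌉+1)`, for every
`k ≥ k₀` the minimum of `α² + μ²` over `{(α,μ) : α ≥ 0, α² + μ² ≤ k², L̄(α,μ) ≤ 0}` equals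
`(q⋆)²`. -/
theorem min_norm_sq_eq_qstar_sq (r s κ : ℝ) (hr : 0 < r) (hs : s ∈ Set.Ioc 0 r) (hκ : 0 < κ)
    (hsep : (⨅ t : ℝ, Elog r s fun h v => (negp (h + t * v)) ^ 2) < κ)
    (qstar : ℝ) (hq0 : 0 < qstar)
    (hqzero : (⨅ ρ : Set.Icc (-1 : ℝ) 1, etaLog r s κ qstar ρ) = 0)
    (hquniq : ∀ q : ℝ, 0 < q →
      (⨅ ρ : Set.Icc (-1 : ℝ) 1, etaLog r s κ q ρ) = 0 → q = qstar) :
    ∀ k : ℝ, Real.sqrt ((⌈qstar ^ 2⌉₊ : ℝ) + 1) ≤ k →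
      IsLeast {v : ℝ | ∃ α μ : ℝ, 0 ≤ α ∧ α ^ 2 + μ ^ 2 ≤ k ^ 2 ∧
        Lbar r s κ α μ ≤ 0 ∧ v = α ^ 2 + μ ^ 2} (qstar ^ 2) :=
  min_norm_sq_eq_qstar_sq_general r s κ hκ qstar hq0 hqzero hquniq
end

section
/- Let ℓ(t) = log(1 + e^{−t}) be the logistic loss, and let α₁, α₂ > 0 and λ > 0. For Υ ∈ ℝ and i ∈ {1, 2}, denote by prox_{α_i ℓ(·/α_i)}(h + Υ_i x; λ) the proximal operator argmin_v { (1/(2λ))(h + Υ_i x − v)² + α_i ℓ(v/α_i) }. If (α₁, Υ₁) ≠ (α₂, Υ₂), then there exists (h, x) ∈ ℝ² such that α₂ · prox_{α₁ ℓ(·/α₁)}(h + Υ₁ x; λ) ≠ α₁ · prox_{α₂ ℓ(·/α₂)}(h + Υ₂ x; λ). -/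
open MeasureTheory Filter Set

/-- The logistic loss `ℓ(t) = log(1 + e^{−t})`. -/
noncomputable def logisticLoss (t : ℝ) : ℝ := Real.log (1 + Real.exp (-t))

/-- `v` is the proximal point `prox_g(x; λ)`, i.e. the minimizer of
`v ↦ (1/(2λ))(x − v)² + g(v)`. -/
def IsProxOf (g : ℝ → ℝ) (lam x v : ℝ) : Prop :=
  ∀ w : ℝ, (1 / (2 * lam)) * (x - v) ^ 2 + g v ≤ (1 / (2 * lam)) * (x - w) ^ 2 + g w

/-! By the first-order condition, the prox map `z ↦ v` of `α ℓ(·/α)` has the explicit inverse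
`v ↦ v − λ/(1 + e^{v/α})`; hence it is injective and does not vanish at `0`. If
`α₂ P₁(h + Υ₁x) = α₁ P₂(h + Υ₂x)` for all `h, x`, then `P₁/α₁ = P₂/α₂`, so the two inverses
agree at every point and `P₁ = P₂`; evaluating at `0` gives `α₁ = α₂`, and injectivity then
gives `Υ₁ = Υ₂`. -/

open Real

theorem hasDerivAt_logisticLoss (t : ℝ) :
    HasDerivAt logisticLoss (-(1 + exp t)⁻¹) t := by
  refine (((hasDerivAt_neg t).exp.const_add 1).log (by positivity)).congr_deriv ?_
  rw [exp_neg]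
  field_simp
  ring

theorem hasDerivAt_const_mul_logisticLoss_div {α : ℝ} (hα : α ≠ 0) (v : ℝ) :
    HasDerivAt (fun w => α * logisticLoss (w / α)) (-(1 + exp (v / α))⁻¹) v := by
  refine (((hasDerivAt_logisticLoss (v / α)).comp v
    ((hasDerivAt_id v).div_const α)).const_mul α).congr_deriv ?_
  field_simp

theorem IsProxOf.eq_add_mul_deriv {g : ℝ → ℝ} {lam x v g' : ℝ} (hlam : lam ≠ 0)
    (hv : IsProxOf g lam x v) (hg : HasDerivAt g g' v) : x = v + lam * g' := by
  have hmin : IsLocalMin (fun w => 1 / (2 * lam) * (x - w) ^ 2 + g w) v :=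
    IsMinOn.isLocalMin (fun w _ => hv w) univ_mem
  have hquad : HasDerivAt (fun w => 1 / (2 * lam) * (x - w) ^ 2) ((v - x) / lam) v := by
    refine ((((hasDerivAt_id' v).const_sub x).fun_pow 2).const_mul (1 / (2 * lam))).congr_deriv ?_
    field_simp
    ring
  have hzero := hmin.hasDerivAt_eq_zero (hquad.add hg)
  field_simp at hzero
  linarith

theorem IsProxOf.eq_sub_of_logisticLoss {lam α x v : ℝ} (hlam : lam ≠ 0) (hα : α ≠ 0)
    (hv : IsProxOf (fun w => α * logisticLoss (w / α)) lam x v) :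
    x = v - lam / (1 + exp (v / α)) := by
  rw [hv.eq_add_mul_deriv hlam (hasDerivAt_const_mul_logisticLoss_div hα v)]
  ring

/-- if `(α₁, Υ₁) ≠ (α₂, Υ₂)` (with `α₁, α₂, λ > 0`), then there exists
`(h, x) ∈ ℝ²` such that
`α₂ · prox_{α₁ℓ(·/α₁)}(h + Υ₁x; λ) ≠ α₁ · prox_{α₂ℓ(·/α₂)}(h + Υ₂x; λ)`. -/
theorem prox_logistic_scaled_ne (lam α₁ α₂ Υ₁ Υ₂ : ℝ)
    (hlam : 0 < lam) (hα₁ : 0 < α₁) (hα₂ : 0 < α₂)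
    (hne : (α₁, Υ₁) ≠ (α₂, Υ₂))
    (P₁ P₂ : ℝ → ℝ)
    (hP₁ : ∀ z : ℝ, IsProxOf (fun v => α₁ * logisticLoss (v / α₁)) lam z (P₁ z))
    (hP₂ : ∀ z : ℝ, IsProxOf (fun v => α₂ * logisticLoss (v / α₂)) lam z (P₂ z)) :
    ∃ h x : ℝ, α₂ * P₁ (h + Υ₁ * x) ≠ α₁ * P₂ (h + Υ₂ * x) := by
  by_contra! hcon
  have foc₁ z := (hP₁ z).eq_sub_of_logisticLoss hlam.ne' hα₁.ne'
  have foc₂ z := (hP₂ z).eq_sub_of_logisticLoss hlam.ne' hα₂.ne'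
  have hscaled z : α₂ * P₁ z = α₁ * P₂ z := by simpa using hcon z 0
  have hP₁_inj : Function.Injective P₁ := fun a b hab => by rw [foc₁ a, foc₁ b, hab]
  have hP₁_eq_P₂ z : P₁ z = P₂ z := by
    have hdiv : P₂ z / α₂ = P₁ z / α₁ := by
      rw [div_eq_div_iff hα₂.ne' hα₁.ne']
      linarith [hscaled z]
    have := foc₂ z
    rw [hdiv] at this
    linarith [foc₁ z]
  have hP₁_zero : P₁ 0 ≠ 0 := fun h0 => by
    have := foc₁ 0
    rw [h0, zero_div, exp_zero] at this
    linarith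
  have hα : α₁ = α₂ := by
    have := hscaled 0
    rw [← hP₁_eq_P₂] at this
    exact (mul_right_cancel₀ hP₁_zero this).symm
  have hΥ : Υ₁ = Υ₂ := by
    have := hcon 0 1
    rw [zero_add, zero_add, mul_one, mul_one, ← hP₁_eq_P₂, hα] at this
    exact hP₁_inj (mul_left_cancel₀ hα₂.ne' this)
  exact hne (by rw [hα, hΥ])
end
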